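/- Let G be a finite group, let p_1, p_2 be distinct primes, and let P_1 be a Sylow p_1-subgroup and P_2 a Sylow p_2-subgroup of G such that G = N_G(P_1) N_G(P_2). Then for every Sylow p_1-subgroup Q_1 and every Sylow p_2-subgroup Q_2 of G, the number of elements x ∈ G satisfying both P_1^x = Q_1 and P_2^x = Q_2 is at least |N_G(P_1) ∩ N_G(P_2)|. -/

import Mathlib

open scoped Pointwise

/-- The conjugate subgroup `H^x = x⁻¹ H x`. -/
def conjSub {G : Type*} [Group G] (H : Subgroup G) (x : G) : Subgroup G :=
  H.map (MulAut.conj x⁻¹).toMonoidHom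

/-!
Let `G` act on pairs `(Q₁, Q₂)` of Sylow subgroups by conjugation; the stabilizer of `(P₁, P₂)` is
`N_G(P₁) ∩ N_G(P₂)`. Writing `Q₁ = u • P₁`, `Q₂ = v • P₂` and `u⁻¹ v = s t` with `s ∈ N_G(P₁)`,
`t ∈ N_G(P₂)`, the element `u s = v t⁻¹` moves `(P₁, P₂)` to `(Q₁, Q₂)`. So the factorization
`G = N_G(P₁) N_G(P₂)` makes the orbit of `(P₁, P₂)` everything, and the elements conjugating
`(P₁, P₂)` to a given pair form a coset of the stabilizer.
-/

namespace MulAction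

variable {G X Y : Type*} [Group G] [MulAction G X] [MulAction G Y]

theorem card_smul_eq_eq_card_stabilizer {a b : X} {g₀ : G} (h : g₀ • a = b) :
    Nat.card {g : G // g • a = b} = Nat.card (stabilizer G a) :=
  Nat.card_congr <| (Equiv.mulLeft g₀⁻¹).subtypeEquiv fun g => by
    rw [mem_stabilizer_iff, Equiv.coe_mulLeft, mul_smul, inv_smul_eq_iff, h]

theorem stabilizer_prodMk (a : X) (b : Y) :
    stabilizer G (a, b) = stabilizer G a ⊓ stabilizer G b := by
  ext g
  simp only [mem_stabilizer_iff, Subgroup.mem_inf, Prod.smul_mk, Prod.ext_iff]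

theorem exists_smul_prodMk_eq_of_mul_stabilizer_eq_univ [IsPretransitive G X]
    [IsPretransitive G Y] {a : X} {b : Y}
    (h : (stabilizer G a : Set G) * (stabilizer G b : Set G) = Set.univ) (a' : X) (b' : Y) :
    ∃ g : G, g • (a, b) = (a', b') := by
  obtain ⟨u, rfl⟩ := exists_smul_eq G a a'
  obtain ⟨v, rfl⟩ := exists_smul_eq G b b'
  obtain ⟨s, hs, t, ht, hst⟩ : u⁻¹ * v ∈ (stabilizer G a : Set G) * (stabilizer G b : Set G) :=
    h ▸ Set.mem_univ _
  have huv : u * s = v * t⁻¹ :=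
    eq_mul_inv_of_mul_eq <| by rw [mul_assoc, show s * t = u⁻¹ * v from hst, mul_inv_cancel_left]
  refine ⟨u * s, ?_⟩
  rw [Prod.smul_mk, mul_smul, mem_stabilizer_iff.mp hs, huv, mul_smul, inv_smul_eq_iff.mpr ht.symm]

end MulAction

theorem conjSub_eq_inv_smul {G : Type*} [Group G] {p : ℕ} (P : Sylow p G) (x : G) :
    conjSub (P : Subgroup G) x = ↑(x⁻¹ • P) :=
  rfl

theorem sylow_sync_count_of_normalizer_product_general
    (G : Type*) [Group G] [Finite G] (p₁ p₂ : ℕ) (hp₁ : p₁.Prime) (hp₂ : p₂.Prime)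
    (P₁ : Sylow p₁ G) (P₂ : Sylow p₂ G)
    (hprod : (Subgroup.normalizer ((P₁ : Subgroup G) : Set G) : Set G) * (Subgroup.normalizer ((P₂ : Subgroup G) : Set G) : Set G) =
      Set.univ)
    (Q₁ : Sylow p₁ G) (Q₂ : Sylow p₂ G) :
    Nat.card (Subgroup.normalizer ((P₁ : Subgroup G) : Set G) ⊓ Subgroup.normalizer ((P₂ : Subgroup G) : Set G) : Subgroup G) ≤
      Nat.card {x : G // conjSub (P₁ : Subgroup G) x = (Q₁ : Subgroup G) ∧
        conjSub (P₂ : Subgroup G) x = (Q₂ : Subgroup G)} := by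
  have : Fact p₁.Prime := ⟨hp₁⟩
  have : Fact p₂.Prime := ⟨hp₂⟩
  have hN₁ : MulAction.stabilizer G P₁ = Subgroup.normalizer ((P₁ : Subgroup G) : Set G) :=
    P₁.stabilizer_eq_normalizer
  have hN₂ : MulAction.stabilizer G P₂ = Subgroup.normalizer ((P₂ : Subgroup G) : Set G) :=
    P₂.stabilizer_eq_normalizer
  rw [← hN₁, ← hN₂] at hprod ⊢
  obtain ⟨g, hg⟩ := MulAction.exists_smul_prodMk_eq_of_mul_stabilizer_eq_univ hprod Q₁ Q₂
  refine le_of_eq ?_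
  calc Nat.card ↥(MulAction.stabilizer G P₁ ⊓ MulAction.stabilizer G P₂)
      = Nat.card {g : G // g • (P₁, P₂) = (Q₁, Q₂)} := by
        rw [MulAction.card_smul_eq_eq_card_stabilizer hg, MulAction.stabilizer_prodMk]
    _ = _ := Nat.card_congr <| (Equiv.inv G).subtypeEquiv fun g => by
        simp only [Equiv.inv_apply, conjSub_eq_inv_smul, inv_inv, Prod.smul_mk, Prod.ext_iff,
          Sylow.ext_iff]

/-- **Lemma.** Let `p₁ ≠ p₂` be primes, `P₁ ∈ Syl_{p₁}(G)`, `P₂ ∈ Syl_{p₂}(G)` with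
`G = N_G(P₁)·N_G(P₂)`. Then for all `Q₁ ∈ Syl_{p₁}(G)`, `Q₂ ∈ Syl_{p₂}(G)` there are at least
`|N_G(P₁) ∩ N_G(P₂)|` elements `x ∈ G` with `P₁^x = Q₁` and `P₂^x = Q₂`. -/
theorem sylow_sync_count_of_normalizer_product
    (G : Type*) [Group G] [Finite G] (p₁ p₂ : ℕ) (hp₁ : p₁.Prime) (hp₂ : p₂.Prime)
    (hne : p₁ ≠ p₂) (P₁ : Sylow p₁ G) (P₂ : Sylow p₂ G)
    (hprod : (Subgroup.normalizer ((P₁ : Subgroup G) : Set G) : Set G) * (Subgroup.normalizer ((P₂ : Subgroup G) : Set G) : Set G) =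
      Set.univ)
    (Q₁ : Sylow p₁ G) (Q₂ : Sylow p₂ G) :
    Nat.card (Subgroup.normalizer ((P₁ : Subgroup G) : Set G) ⊓ Subgroup.normalizer ((P₂ : Subgroup G) : Set G) : Subgroup G) ≤
      Nat.card {x : G // conjSub (P₁ : Subgroup G) x = (Q₁ : Subgroup G) ∧
        conjSub (P₂ : Subgroup G) x = (Q₂ : Subgroup G)} :=
  sylow_sync_count_of_normalizer_product_general G p₁ p₂ hp₁ hp₂ P₁ P₂ hprod Q₁ Q₂
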